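/- The Lagrangian curl annihilates Lagrangian gradients. Let U ⊆ ℝ³ be open, let η : U → ℝ³ be of class C² with Dη(x) invertible for every x ∈ U, set A(x) = (Dη(x))^{−1}, and let F : U → ℝ be of class C². Then for every x ∈ U and every k ∈ {1,2,3}: ε_{kji} · A^s_j(x) · ∂_s( A^r_i ∂_r F )(x) = 0 (summation over i, j, r, s ∈ {1,2,3}), i.e. curl_η(∇_η F) = 0, where (∇_η F)_i = A^r_i F,_r and [curl_η W]_k = ε_{kji} A^s_j W^i,_s. -/

import Mathlib

open Matrix

/-- Spatial Jacobian matrix of a map `ℝ³ → ℝ³`, entries `(Dη)^r_s = ∂η^r/∂x_s`. -/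
noncomputable def sjac (η : (Fin 3 → ℝ) → (Fin 3 → ℝ)) (x : Fin 3 → ℝ) :
    Matrix (Fin 3) (Fin 3) ℝ :=
  Matrix.of fun r s => fderiv ℝ (fun y => η y r) x (Pi.single s 1)

/-- The permutation symbol `ε_{ijk}`. -/
def eps (i j k : Fin 3) : ℝ :=
  if (i, j, k) = (0, 1, 2) ∨ (i, j, k) = (1, 2, 0) ∨ (i, j, k) = (2, 0, 1) then 1
  else if (i, j, k) = (2, 1, 0) ∨ (i, j, k) = (1, 0, 2) ∨ (i, j, k) = (0, 2, 1) then -1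
  else 0

/-!
Write `g = ∇_η F = Aᵀ ∇F`, so that `(Dη)ᵀ g = ∇F` wherever `Dη` is invertible. Differentiating this
identity gives `(Dη)ᵀ Dg = H` with `H_{rs} = ∂_s ∂_r F - g_i ∂_s ∂_r η^i`, which is symmetric by
Schwarz's theorem. Hence `Dg A = Aᵀ H A` is symmetric, and `curl_η g` is the contraction of this
matrix with the antisymmetric symbol `ε_k`, so it vanishes.
-/

open Topology

section MatrixCalculus

variable {𝕜 E ι : Type*} [NontriviallyNormedField 𝕜] [NormedAddCommGroup E] [NormedSpace 𝕜 E]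
  [Fintype ι] [DecidableEq ι] {M : E → Matrix ι ι 𝕜} {x : E}

theorem DifferentiableAt.matrix_det (hM : ∀ i j, DifferentiableAt 𝕜 (fun y => M y i j) x) :
    DifferentiableAt 𝕜 (fun y => (M y).det) x := by
  simp only [Matrix.det_apply]
  fun_prop

theorem DifferentiableAt.matrix_adjugate (hM : ∀ i j, DifferentiableAt 𝕜 (fun y => M y i j) x)
    (i j : ι) : DifferentiableAt 𝕜 (fun y => (M y).adjugate i j) x := by
  simp only [Matrix.adjugate_apply]
  refine DifferentiableAt.matrix_det fun a b => ?_
  simp only [Matrix.updateRow_apply]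
  split_ifs
  · exact differentiableAt_const _
  · exact hM a b

theorem DifferentiableAt.matrix_inv (hM : ∀ i j, DifferentiableAt 𝕜 (fun y => M y i j) x)
    (hdet : (M x).det ≠ 0) (i j : ι) : DifferentiableAt 𝕜 (fun y => (M y)⁻¹ i j) x := by
  simp only [Matrix.inv_def, Matrix.smul_apply, Ring.inverse_eq_inv', smul_eq_mul]
  exact ((DifferentiableAt.matrix_det hM).inv hdet).mul (DifferentiableAt.matrix_adjugate hM i j)

end MatrixCalculus

section SecondDerivative

variable {E F : Type*} [NormedAddCommGroup E] [NormedSpace ℝ E] [NormedAddCommGroup F]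
  [NormedSpace ℝ F] {f : E → F} {x : E}

theorem ContDiffAt.differentiableAt_fderiv_apply (hf : ContDiffAt ℝ 2 f x) (v : E) :
    DifferentiableAt ℝ (fun y => fderiv ℝ f y v) x :=
  ((hf.fderiv_right (m := 1) le_rfl).differentiableAt one_ne_zero).clm_apply
    (differentiableAt_const v)

theorem ContDiffAt.fderiv_fderiv_apply_comm (hf : ContDiffAt ℝ 2 f x) (v w : E) :
    fderiv ℝ (fun y => fderiv ℝ f y v) x w = fderiv ℝ (fun y => fderiv ℝ f y w) x v := by
  have hd : DifferentiableAt ℝ (fderiv ℝ f) x :=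
    (hf.fderiv_right (m := 1) le_rfl).differentiableAt one_ne_zero
  simp only [fderiv_clm_apply hd (differentiableAt_const _)]
  simpa using (hf.isSymmSndFDerivAt (by simp)) w v

end SecondDerivative

theorem fderiv_sum_mul_apply {𝕜 E ι : Type*} [NontriviallyNormedField 𝕜] [NormedAddCommGroup E]
    [NormedSpace 𝕜 E] {s : Finset ι} {a b : ι → E → 𝕜} {x : E}
    (ha : ∀ i ∈ s, DifferentiableAt 𝕜 (a i) x) (hb : ∀ i ∈ s, DifferentiableAt 𝕜 (b i) x) (v : E) :
    fderiv 𝕜 (fun y => ∑ i ∈ s, a i y * b i y) x v =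
      ∑ i ∈ s, (fderiv 𝕜 (a i) x v * b i x + a i x * fderiv 𝕜 (b i) x v) := by
  rw [fderiv_fun_sum (A := fun i y => a i y * b i y) fun i hi => (ha i hi).mul (hb i hi),
    _root_.sum_apply]
  refine Finset.sum_congr rfl fun i hi => ?_
  rw [fderiv_fun_mul (ha i hi) (hb i hi)]
  simp only [_root_.add_apply, _root_.smul_apply, smul_eq_mul]
  ring

theorem Matrix.IsSymm.transpose_mul_mul {α n : Type*} [CommSemiring α] [Fintype n]
    {H : Matrix n n α} (hH : H.IsSymm) (A : Matrix n n α) : (Aᵀ * H * A).IsSymm := by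
  rw [Matrix.IsSymm, Matrix.transpose_mul, Matrix.transpose_mul, Matrix.transpose_transpose, hH.eq,
    Matrix.mul_assoc]

theorem eps_swap (k i j : Fin 3) : eps k j i = -eps k i j := by
  fin_cases k <;> fin_cases i <;> fin_cases j <;> norm_num [eps, Prod.ext_iff, Fin.ext_iff]

theorem sum_eps_mul_eq_zero_of_isSymm {S : Matrix (Fin 3) (Fin 3) ℝ} (hS : S.IsSymm) (k : Fin 3) :
    ∑ i, ∑ j, eps k j i * S i j = 0 := by
  have h : ∑ i, ∑ j, eps k j i * S i j = ∑ i, ∑ j, -(eps k j i * S i j) := by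
    rw [Finset.sum_comm]
    refine Finset.sum_congr rfl fun i _ => Finset.sum_congr rfl fun j _ => ?_
    rw [eps_swap, hS.apply, neg_mul]
  simp only [Finset.sum_neg_distrib] at h
  linarith

noncomputable def lagrangianGrad (η : (Fin 3 → ℝ) → (Fin 3 → ℝ)) (F : (Fin 3 → ℝ) → ℝ)
    (y : Fin 3 → ℝ) : Fin 3 → ℝ :=
  ((sjac η y)⁻¹)ᵀ *ᵥ fun r => fderiv ℝ F y (Pi.single r 1)

noncomputable def lagrangianCurl (η W : (Fin 3 → ℝ) → (Fin 3 → ℝ)) (x : Fin 3 → ℝ) :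
    Fin 3 → ℝ :=
  fun k => ∑ i, ∑ j, ∑ s, eps k j i * (sjac η x)⁻¹ s j * sjac W x i s

-- The Hessian of `F` for the flat connection pulled back by `η`: its Christoffel symbols
-- `Γ^k_{rs} = A^k_i ∂_r ∂_s η^i` are symmetric in `r, s`, hence so is this matrix.
noncomputable def pullbackHessian (η : (Fin 3 → ℝ) → (Fin 3 → ℝ)) (F : (Fin 3 → ℝ) → ℝ)
    (x : Fin 3 → ℝ) : Matrix (Fin 3) (Fin 3) ℝ :=
  Matrix.of fun r s => fderiv ℝ (fun y => fderiv ℝ F y (Pi.single r 1)) x (Pi.single s 1) -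
    ∑ i, lagrangianGrad η F x i * fderiv ℝ (fun y => sjac η y i r) x (Pi.single s 1)

theorem sjac_transpose_mulVec_lagrangianGrad {η : (Fin 3 → ℝ) → (Fin 3 → ℝ)}
    {y : Fin 3 → ℝ} (F : (Fin 3 → ℝ) → ℝ) (hdet : (sjac η y).det ≠ 0) :
    (sjac η y)ᵀ *ᵥ lagrangianGrad η F y = fun r => fderiv ℝ F y (Pi.single r 1) := by
  rw [lagrangianGrad, Matrix.mulVec_mulVec, ← Matrix.transpose_mul,
    Matrix.nonsing_inv_mul _ hdet.isUnit, Matrix.transpose_one, Matrix.one_mulVec]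

section Pointwise

variable {η : (Fin 3 → ℝ) → (Fin 3 → ℝ)} {F : (Fin 3 → ℝ) → ℝ} {x : Fin 3 → ℝ}

theorem differentiableAt_sjac_apply (hη : ContDiffAt ℝ 2 η x) (i r : Fin 3) :
    DifferentiableAt ℝ (fun y => sjac η y i r) x :=
  (contDiffAt_pi.1 hη i).differentiableAt_fderiv_apply (Pi.single r 1)

theorem differentiableAt_lagrangianGrad (hη : ContDiffAt ℝ 2 η x) (hF : ContDiffAt ℝ 2 F x)
    (hdet : (sjac η x).det ≠ 0) (i : Fin 3) :
    DifferentiableAt ℝ (fun y => lagrangianGrad η F y i) x :=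
  show DifferentiableAt ℝ (fun y => ∑ r, (sjac η y)⁻¹ r i * fderiv ℝ F y (Pi.single r 1)) x from
  DifferentiableAt.fun_sum fun r _ =>
    (DifferentiableAt.matrix_inv (differentiableAt_sjac_apply hη) hdet r i).mul
      (hF.differentiableAt_fderiv_apply _)

theorem pullbackHessian_isSymm (hη : ContDiffAt ℝ 2 η x) (hF : ContDiffAt ℝ 2 F x) :
    (pullbackHessian η F x).IsSymm := by
  refine Matrix.IsSymm.ext fun r s => ?_
  simp only [pullbackHessian, Matrix.of_apply, sjac,
    hF.fderiv_fderiv_apply_comm (Pi.single r 1),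
    fun i => (contDiffAt_pi.1 hη i).fderiv_fderiv_apply_comm (Pi.single r 1)]

theorem sjac_transpose_mul_sjac_lagrangianGrad (hη : ContDiffAt ℝ 2 η x)
    (hF : ContDiffAt ℝ 2 F x) (hdet : ∀ᶠ y in 𝓝 x, (sjac η y).det ≠ 0) :
    (sjac η x)ᵀ * sjac (lagrangianGrad η F) x = pullbackHessian η F x := by
  ext r s
  have hid : (fun y => ∑ i, sjac η y i r * lagrangianGrad η F y i) =ᶠ[𝓝 x]
      fun y => fderiv ℝ F y (Pi.single r 1) :=
    hdet.mono fun y hy => congrFun (sjac_transpose_mulVec_lagrangianGrad F hy) r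
  have h := congrArg (fun L : (Fin 3 → ℝ) →L[ℝ] ℝ => L (Pi.single s 1)) hid.fderiv_eq
  rw [fderiv_sum_mul_apply (fun i _ => differentiableAt_sjac_apply hη i r)
    (fun i _ => differentiableAt_lagrangianGrad hη hF hdet.self_of_nhds i)] at h
  simp only [pullbackHessian, Matrix.mul_apply, Matrix.transpose_apply, Matrix.of_apply, ← h,
    Finset.sum_add_distrib, mul_comm (lagrangianGrad η F x _), add_sub_cancel_left]
  rfl

theorem sjac_lagrangianGrad_eq (hη : ContDiffAt ℝ 2 η x) (hF : ContDiffAt ℝ 2 F x)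
    (hdet : ∀ᶠ y in 𝓝 x, (sjac η y).det ≠ 0) :
    sjac (lagrangianGrad η F) x = ((sjac η x)⁻¹)ᵀ * pullbackHessian η F x := by
  rw [← sjac_transpose_mul_sjac_lagrangianGrad hη hF hdet, ← Matrix.mul_assoc,
    ← Matrix.transpose_mul, Matrix.mul_nonsing_inv _ hdet.self_of_nhds.isUnit,
    Matrix.transpose_one, Matrix.one_mul]

theorem lagrangianCurl_lagrangianGrad (hη : ContDiffAt ℝ 2 η x) (hF : ContDiffAt ℝ 2 F x)
    (hdet : ∀ᶠ y in 𝓝 x, (sjac η y).det ≠ 0) :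
    lagrangianCurl η (lagrangianGrad η F) x = 0 := by
  funext k
  set A := (sjac η x)⁻¹
  have hsum : lagrangianCurl η (lagrangianGrad η F) x k =
      ∑ i, ∑ j, eps k j i * (sjac (lagrangianGrad η F) x * A) i j := by
    refine Finset.sum_congr rfl fun i _ => Finset.sum_congr rfl fun j _ => ?_
    rw [Matrix.mul_apply, Finset.mul_sum]
    exact Finset.sum_congr rfl fun s _ => by ring
  rw [hsum, sjac_lagrangianGrad_eq hη hF hdet]
  exact sum_eps_mul_eq_zero_of_isSymm ((pullbackHessian_isSymm hη hF).transpose_mul_mul A) k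

end Pointwise

/-- The Lagrangian curl annihilates Lagrangian gradients: with `A = (Dη)⁻¹`,
for `η, F` of class `C²` on an open set `U` with `Dη` invertible on `U`,
`curl_η (∇_η F) = 0`, i.e. `ε_{kji} A^s_j ∂_s (A^r_i F,_r) = 0` on `U`. -/
theorem curl_eta_grad_eta (U : Set (Fin 3 → ℝ)) (hU : IsOpen U)
    (η : (Fin 3 → ℝ) → (Fin 3 → ℝ)) (hη : ContDiffOn ℝ 2 η U)
    (hinv : ∀ x ∈ U, (sjac η x).det ≠ 0)
    (F : (Fin 3 → ℝ) → ℝ) (hF : ContDiffOn ℝ 2 F U) :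
    ∀ x ∈ U, ∀ k : Fin 3,
      ∑ i : Fin 3, ∑ j : Fin 3, ∑ s : Fin 3,
        eps k j i * (sjac η x)⁻¹ s j *
          fderiv ℝ
            (fun y => ∑ r : Fin 3, (sjac η y)⁻¹ r i * fderiv ℝ F y (Pi.single r 1))
            x (Pi.single s 1) = 0 := by
  intro x hx k
  have hUx : U ∈ 𝓝 x := hU.mem_nhds hx
  exact congrFun (lagrangianCurl_lagrangianGrad (hη.contDiffAt hUx) (hF.contDiffAt hUx)
    (Filter.eventually_of_mem hUx hinv)) k
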